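/- Let y = x* + η ∈ ℝ^n with x* in the span of orthonormal vectors v₁,...,v_p (p ≤ n), and extend to an orthonormal basis v₁,...,v_n. Define the estimate x_t = Σ_{i=1}^n (1 − (1 − α σ_i²)^t) ⟨y, v_i⟩ v_i with 0 < α σ_i² ≤ 1 for all i. Then ‖x_t − x*‖₂² ≤ Σ_{i=1}^p (1 − α σ_p²)^{2t} ⟨x*, v_i⟩² · 2 + 2 Σ_{i=1}^n (1 − (1 − α σ_i²)^t)² ⟨η, v_i⟩², i.e., the error splits into a signal-fitting term decaying geometrically in t and a noise-fitting term bounded by the fitted noise energy. -/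

import Mathlib

/-!
Expanding in the basis `b`, the error `x_t - x*` is the difference of the filtered noise
`∑ (1 - g i) ⟪η, b i⟫ b i` and the unfitted signal `∑ g i ⟪x*, b i⟫ b i`, where
`g i = (1 - α σ_i²)^t`. The inequality `‖u - v‖² ≤ 2‖u‖² + 2‖v‖²` and Parseval split the squared
error into the two sums. The signal sum only runs over `i ≤ p`, and there `σ_p ≤ σ_i` gives
`0 ≤ 1 - α σ_i² ≤ 1 - α σ_p²`.
-/

open RealInnerProductSpace

theorem norm_sub_sq_le_two_mul_add {E : Type*} [SeminormedAddCommGroup E] (u v : E) :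
    ‖u - v‖ ^ 2 ≤ 2 * ‖u‖ ^ 2 + 2 * ‖v‖ ^ 2 :=
  calc ‖u - v‖ ^ 2 ≤ (‖u‖ + ‖v‖) ^ 2 := by gcongr; exact norm_sub_le u v
    _ ≤ 2 * ‖u‖ ^ 2 + 2 * ‖v‖ ^ 2 := by linarith [add_sq_le (a := ‖u‖) (b := ‖v‖)]

namespace OrthonormalBasis

variable {ι E : Type*} [Fintype ι] [NormedAddCommGroup E] [InnerProductSpace ℝ E]

theorem norm_sum_smul_sq (b : OrthonormalBasis ι ℝ E) (c : ι → ℝ) :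
    ‖∑ i, c i • b i‖ ^ 2 = ∑ i, c i ^ 2 := by
  rw [b.sum_repr_symm (WithLp.toLp 2 c), LinearIsometryEquiv.norm_map, EuclideanSpace.norm_sq_eq]
  simp

theorem sum_one_sub_mul_inner_add_smul_sub (b : OrthonormalBasis ι ℝ E) (g : ι → ℝ)
    (x η : E) :
    ∑ i, ((1 - g i) * ⟪x + η, b i⟫) • b i - x =
      ∑ i, ((1 - g i) * ⟪η, b i⟫) • b i - ∑ i, (g i * ⟪x, b i⟫) • b i := by
  nth_rw 2 [← b.sum_repr' x]
  simp only [← Finset.sum_sub_distrib, ← sub_smul, inner_add_left, real_inner_comm (b _) x]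
  congr! 2
  ring

theorem norm_sum_one_sub_mul_inner_add_smul_sub_sq_le (b : OrthonormalBasis ι ℝ E)
    (g : ι → ℝ) (x η : E) :
    ‖∑ i, ((1 - g i) * ⟪x + η, b i⟫) • b i - x‖ ^ 2 ≤
      2 * ∑ i, g i ^ 2 * ⟪x, b i⟫ ^ 2 + 2 * ∑ i, (1 - g i) ^ 2 * ⟪η, b i⟫ ^ 2 := by
  rw [sum_one_sub_mul_inner_add_smul_sub]
  refine (norm_sub_sq_le_two_mul_add _ _).trans_eq ?_
  simp only [norm_sum_smul_sq, mul_pow]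
  ring

end OrthonormalBasis

theorem pow_one_sub_mul_sq_le_pow_one_sub_mul_sq {α s s' : ℝ} (hα : 0 ≤ α) (hs : 0 ≤ s)
    (hss' : s ≤ s') (hs' : α * s' ^ 2 ≤ 1) (k : ℕ) :
    (1 - α * s' ^ 2) ^ k ≤ (1 - α * s ^ 2) ^ k := by
  have hsq : α * s ^ 2 ≤ α * s' ^ 2 := by gcongr
  exact pow_le_pow_left₀ (by linarith) (by linarith) k

/-- error decomposition for the linearized gradient-descent estimate:
signal-fitting term decaying geometrically in `t` plus noise-fitting term. -/
theorem gd_denoising_decomposition (n : ℕ) (b : OrthonormalBasis (Fin n) ℝ (EuclideanSpace ℝ (Fin n)))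
    (σ : Fin n → ℝ) (hσpos : ∀ i, 0 < σ i) (hσmono : ∀ i j : Fin n, i ≤ j → σ j ≤ σ i)
    (α : ℝ) (hα : 0 < α) (hα1 : ∀ i, α * (σ i) ^ 2 ≤ 1)
    (p : Fin n) (xstar η : EuclideanSpace ℝ (Fin n))
    (hspan : ∀ i : Fin n, p < i → ⟪xstar, b i⟫ = 0)
    (y : EuclideanSpace ℝ (Fin n)) (hy : y = xstar + η) (t : ℕ) :
    ‖(∑ i, ((1 - (1 - α * (σ i) ^ 2) ^ t) * ⟪y, b i⟫) • b i) - xstar‖ ^ 2 ≤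
      2 * (∑ i ∈ Finset.univ.filter (· ≤ p),
            (1 - α * (σ p) ^ 2) ^ (2 * t) * ⟪xstar, b i⟫ ^ 2) +
      2 * (∑ i, (1 - (1 - α * (σ i) ^ 2) ^ t) ^ 2 * ⟪η, b i⟫ ^ 2) := by
  subst hy
  refine (b.norm_sum_one_sub_mul_inner_add_smul_sub_sq_le (fun i ↦ (1 - α * σ i ^ 2) ^ t)
    xstar η).trans ?_
  have hsignal : ∑ i, ((1 - α * σ i ^ 2) ^ t) ^ 2 * ⟪xstar, b i⟫ ^ 2 ≤
      ∑ i ∈ Finset.univ.filter (· ≤ p), (1 - α * σ p ^ 2) ^ (2 * t) * ⟪xstar, b i⟫ ^ 2 := by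
    rw [← Finset.sum_filter_of_ne (p := (· ≤ p)) fun i _ hi ↦ not_lt.mp fun hpi ↦
      hi (by rw [hspan i hpi]; ring)]
    refine Finset.sum_le_sum fun i hi ↦ ?_
    rw [← pow_mul, mul_comm t]
    exact mul_le_mul_of_nonneg_right (pow_one_sub_mul_sq_le_pow_one_sub_mul_sq hα.le
      (hσpos p).le (hσmono i p (Finset.mem_filter.mp hi).2) (hα1 i) _) (sq_nonneg _)
  linarith
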